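/- Let (X,d) be a metric space that has an accumulation point (i.e., there is a point x ∈ X such that every ball B_d(x,r) with r > 0 contains a point different from x). Then for every real number c with 0 < c < 1 there exists a distance d_c on X such that c·d(p,q) ≤ d_c(p,q) ≤ d(p,q) for all p,q ∈ X and such that the metric space (X,d_c) does not satisfy the Besicovitch Covering Property. -/

import Mathlib

/-!
Let `dc` be `dist` with a shortcut through the accumulation point `x` at cost `c`:
`dc p q = min (dist p q) (c * (dist p x + dist q x))`. Pick `q n → x` with
`dist (q m) x ≤ δ * dist (q n) x` for `n < m`, where `c + δ < 1`. The ball centred at `q m` of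
radius `dc x (q m) ≤ c * dist (q m) x` contains `x`, and the fast decay keeps every other `q n` out
of it. So a cover of `{q n}` by these balls must use all of them, and all of them contain `x`.
-/

def QBall {X : Type*} (d : X → X → ℝ) (p : X) (r : ℝ) : Set X := {q | d q p ≤ r}

def QBounded {X : Type*} (d : X → X → ℝ) (A : Set X) : Prop :=
  ∃ p r, 0 < r ∧ A ⊆ QBall d p r

/-- A subfamily of the balls `B(a, r a)`, `a ∈ A`, is given by its set of centres `F ⊆ A`. -/
def HasBCP {X : Type*} (d : X → X → ℝ) : Prop :=
  ∃ N : ℕ, 1 ≤ N ∧ ∀ (A : Set X) (r : X → ℝ), QBounded d A → (∀ a ∈ A, 0 < r a) →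
    ∃ F : Set X, F ⊆ A ∧ F.Countable ∧ (∀ a ∈ A, ∃ x ∈ F, a ∈ QBall d x (r x)) ∧
      ∀ y : X, ({x ∈ F | y ∈ QBall d x (r x)}).encard ≤ (N : ℕ∞)

theorem not_hasBCP_of_infinite_of_forall_lt {X : Type*} {d : X → X → ℝ} {A : Set X} (x : X)
    (hA : A.Infinite) (hbdd : QBounded d A) (hpos : ∀ a ∈ A, 0 < d x a)
    (hsep : ∀ a ∈ A, ∀ b ∈ A, a ≠ b → d x b < d a b) : ¬ HasBCP d := by
  rintro ⟨N, -, hN⟩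
  obtain ⟨F, hFA, -, hcover, hmult⟩ := hN A (d x) hbdd hpos
  have hAF : A ⊆ F := by
    intro a ha
    obtain ⟨b, hbF, hab⟩ := hcover a ha
    obtain rfl | hne := eq_or_ne a b
    · exact hbF
    · exact absurd hab (hsep a ha b (hFA hbF) hne).not_ge
  have hx_mem : {b ∈ F | x ∈ QBall d b (d x b)} = F := by
    ext b
    simp [QBall]
  have := hmult x
  rw [hx_mem, (hA.mono hAF).encard_eq] at this
  simp at this

section Shortcut

variable {X : Type*} [MetricSpace X]

def shortcutDist (x : X) (c : ℝ) (p q : X) : ℝ := min (dist p q) (c * (dist p x + dist q x))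

variable {x : X} {c : ℝ}

theorem shortcutDist_nonneg (hc0 : 0 ≤ c) (p q : X) : 0 ≤ shortcutDist x c p q :=
  le_min dist_nonneg (by positivity)

theorem shortcutDist_comm (p q : X) : shortcutDist x c p q = shortcutDist x c q p := by
  simp only [shortcutDist, dist_comm p q, add_comm (dist p x)]

theorem shortcutDist_le_dist (p q : X) : shortcutDist x c p q ≤ dist p q :=
  min_le_left _ _

theorem shortcutDist_le_mul_dist (q : X) : shortcutDist x c x q ≤ c * dist q x :=
  (min_le_right _ _).trans_eq (by rw [dist_self, zero_add])

theorem mul_dist_le_shortcutDist (hc0 : 0 ≤ c) (hc1 : c ≤ 1) (p q : X) :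
    c * dist p q ≤ shortcutDist x c p q := by
  refine le_min (mul_le_of_le_one_left dist_nonneg hc1) ?_
  calc c * dist p q ≤ c * (dist p x + dist x q) := by gcongr; exact dist_triangle p x q
    _ = c * (dist p x + dist q x) := by rw [dist_comm x q]

theorem shortcutDist_self (hc0 : 0 ≤ c) (p : X) : shortcutDist x c p p = 0 := by
  simp only [shortcutDist, dist_self]
  exact min_eq_left (by positivity)

theorem shortcutDist_pos (hc0 : 0 < c) (hc1 : c ≤ 1) {p q : X} (hpq : p ≠ q) :
    0 < shortcutDist x c p q :=
  (mul_pos hc0 (dist_pos.2 hpq)).trans_le (mul_dist_le_shortcutDist hc0.le hc1 p q)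

theorem shortcutDist_eq_zero_iff (hc0 : 0 < c) (hc1 : c ≤ 1) {p q : X} :
    shortcutDist x c p q = 0 ↔ p = q :=
  ⟨fun h ↦ not_not.1 fun hpq ↦ (shortcutDist_pos hc0 hc1 hpq).ne' h,
    fun h ↦ h ▸ shortcutDist_self hc0.le p⟩

theorem shortcutDist_lt_of_mul_dist_lt (hc : 0 < c) {y z : X} (hz : z ≠ x)
    (h : c * dist y x < dist z y) : shortcutDist x c x y < shortcutDist x c z y :=
  (shortcutDist_le_mul_dist y).trans_lt <|
    lt_min h (by linarith [mul_pos hc (dist_pos.2 hz), mul_add c (dist z x) (dist y x)])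

theorem shortcutDist_triangle (hc0 : 0 ≤ c) (hc1 : c ≤ 1) (p z q : X) :
    shortcutDist x c p q ≤ shortcutDist x c p z + shortcutDist x c z q := by
  have hpz : c * dist p x ≤ dist p z + c * dist z x := by
    linarith [mul_le_mul_of_nonneg_left (dist_triangle p z x) hc0,
      mul_le_of_le_one_left (dist_nonneg (x := p) (y := z)) hc1]
  have hzq : c * dist q x ≤ dist z q + c * dist z x := by
    linarith [mul_le_mul_of_nonneg_left (dist_triangle_left q x z) hc0,
      mul_le_of_le_one_left (dist_nonneg (x := z) (y := q)) hc1]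
  have hzx : 0 ≤ c * dist z x := by positivity
  have htri := dist_triangle p z q
  unfold shortcutDist
  rcases min_cases (dist p z) (c * (dist p x + dist z x)) with ⟨h1, -⟩ | ⟨h1, -⟩ <;>
    rcases min_cases (dist z q) (c * (dist z x + dist q x)) with ⟨h2, -⟩ | ⟨h2, -⟩ <;>
    rw [h1, h2]
  · exact min_le_of_left_le htri
  all_goals exact min_le_of_right_le (by linarith)

end Shortcut

theorem mul_dist_lt_dist_of_dist_le_mul {X : Type*} [MetricSpace X] {x y z : X} {c δ : ℝ}
    (hc : 0 ≤ c) (hcδ : c + δ < 1) (hy : 0 < dist y x) (hyz : dist y x ≤ δ * dist z x) :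
    c * dist y x < dist z y ∧ c * dist z x < dist z y := by
  have hlow : dist z x - dist y x ≤ dist z y := by linarith [dist_triangle z y x]
  have hz : 0 < dist z x := by
    refine dist_nonneg.lt_of_ne fun h ↦ ?_
    rw [← h, mul_zero] at hyz
    linarith
  have hδ : 0 < δ := pos_of_mul_pos_left (hy.trans_le hyz) hz.le
  constructor
  · have : δ * (dist z x - dist y x) ≤ δ * dist z y := by gcongr
    nlinarith [mul_nonneg (by linarith : 0 ≤ 1 - δ) (dist_nonneg (x := z) (y := y)),
      mul_pos (by linarith : 0 < 1 - δ - c) hy]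
  · nlinarith

theorem mul_dist_lt_dist_of_forall_lt_dist_le_mul {X : Type*} [MetricSpace X] {x : X}
    {q : ℕ → X} {c δ : ℝ} (hc : 0 ≤ c) (hcδ : c + δ < 1) (hqx : ∀ n, q n ≠ x)
    (hdecay : ∀ n m, n < m → dist (q m) x ≤ δ * dist (q n) x) {n m : ℕ} (hnm : n ≠ m) :
    c * dist (q m) x < dist (q n) (q m) := by
  rcases hnm.lt_or_gt with h | h
  · exact (mul_dist_lt_dist_of_dist_le_mul hc hcδ (dist_pos.2 (hqx m)) (hdecay n m h)).1
  · rw [dist_comm (q n)]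
    exact (mul_dist_lt_dist_of_dist_le_mul hc hcδ (dist_pos.2 (hqx n)) (hdecay m n h)).2

theorem exists_seq_dist_le_mul {X : Type*} [MetricSpace X] {x : X}
    (hacc : ∀ r : ℝ, 0 < r → ∃ y : X, y ≠ x ∧ dist y x ≤ r) {δ : ℝ} (hδ0 : 0 < δ) (hδ1 : δ ≤ 1) :
    ∃ q : ℕ → X, (∀ n, q n ≠ x) ∧ Antitone (fun n ↦ dist (q n) x) ∧
      ∀ n m, n < m → dist (q m) x ≤ δ * dist (q n) x := by
  have hnext : ∀ y : {y : X // y ≠ x}, ∃ y' : {y : X // y ≠ x}, dist y'.1 x ≤ δ * dist y.1 x :=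
    fun y ↦ by
      obtain ⟨y', hy'x, hy'⟩ := hacc _ (mul_pos hδ0 (dist_pos.2 y.2))
      exact ⟨⟨y', hy'x⟩, hy'⟩
  choose next hnext using hnext
  obtain ⟨y₀, hy₀⟩ := hacc 1 one_pos
  set q : ℕ → X := fun n ↦ (next^[n] ⟨y₀, hy₀.1⟩).1
  have hsucc : ∀ n, dist (q (n + 1)) x ≤ δ * dist (q n) x := fun n ↦ by
    simp only [q, Function.iterate_succ_apply']
    exact hnext _
  have hanti : Antitone fun n ↦ dist (q n) x := antitone_nat_of_succ_le fun n ↦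
    (hsucc n).trans (mul_le_of_le_one_left dist_nonneg hδ1)
  exact ⟨q, fun n ↦ (next^[n] _).2, hanti, fun n m hnm ↦ (hanti hnm).trans (hsucc n)⟩

theorem statement0 {X : Type*} [MetricSpace X]
    (hacc : ∃ x : X, ∀ r : ℝ, 0 < r → ∃ y : X, y ≠ x ∧ dist y x ≤ r)
    (c : ℝ) (hc0 : 0 < c) (hc1 : c < 1) :
    ∃ dc : X → X → ℝ,
      (∀ p q, 0 ≤ dc p q) ∧
      (∀ p q, dc p q = dc q p) ∧
      (∀ p q, dc p q = 0 ↔ p = q) ∧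
      (∀ p p' q, dc p q ≤ dc p p' + dc p' q) ∧
      (∀ p q, c * dist p q ≤ dc p q ∧ dc p q ≤ dist p q) ∧
      ¬ HasBCP dc := by
  obtain ⟨x, hx⟩ := hacc
  obtain ⟨q, hqx, hanti, hdecay⟩ :=
    exists_seq_dist_le_mul hx (δ := (1 - c) / 2) (by linarith) (by linarith)
  have hsep : ∀ {n m}, n ≠ m → c * dist (q m) x < dist (q n) (q m) :=
    mul_dist_lt_dist_of_forall_lt_dist_le_mul hc0.le (by linarith) hqx hdecay
  have hinj : Function.Injective q := fun n m h ↦ by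
    by_contra hnm
    exact (hsep hnm).not_ge (by rw [h, dist_self]; positivity)
  refine ⟨shortcutDist x c, shortcutDist_nonneg hc0.le, shortcutDist_comm,
    fun _ _ ↦ shortcutDist_eq_zero_iff hc0 hc1.le, shortcutDist_triangle hc0.le hc1.le,
    fun p r ↦ ⟨mul_dist_le_shortcutDist hc0.le hc1.le p r, shortcutDist_le_dist p r⟩, ?_⟩
  refine not_hasBCP_of_infinite_of_forall_lt x (Set.infinite_range_of_injective hinj)
    ⟨x, dist (q 0) x, dist_pos.2 (hqx 0), ?_⟩ ?_ ?_
  · rintro _ ⟨n, rfl⟩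
    exact (shortcutDist_le_dist _ _).trans (hanti n.zero_le)
  · rintro _ ⟨m, rfl⟩
    exact shortcutDist_pos hc0 hc1.le (hqx m).symm
  · rintro _ ⟨n, rfl⟩ _ ⟨m, rfl⟩ hne
    exact shortcutDist_lt_of_mul_dist_lt hc0 (hqx n) (hsep (ne_of_apply_ne q hne))
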